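/- arXiv:2503.04040 — 4 statements merged into one kernel-verified Lean document; each statement's English description precedes it below -/
import Mathlib

section
/- Let B ∈ ℂ^{N×N} be Hermitian positive definite and A ∈ ℂ^{N×d}. Then for every Φ ∈ ℂ^{N×d}, the matrix Aᴴ B⁻¹ A − (Aᴴ Φ + Φᴴ A − Φᴴ B Φ) equals (Φ − B⁻¹A)ᴴ B (Φ − B⁻¹A) and hence is positive semidefinite; in particular Aᴴ Φ + Φᴴ A − Φᴴ B Φ ⪯ Aᴴ B⁻¹ A in the Loewner order, with equality if and only if Φ = B⁻¹ A. -/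
open Matrix
open scoped ComplexOrder

/-! Completing the square: with `Y = B⁻¹ A` one has `B Y = A` and `Yᴴ B = Aᴴ`, so expanding
`(Φ - Y)ᴴ B (Φ - Y)` gives exactly the gap `Aᴴ B⁻¹ A - (Aᴴ Φ + Φᴴ A - Φᴴ B Φ)`. A congruence of a
positive definite matrix is positive semidefinite, and it vanishes only at the zero matrix, since
its diagonal entries are the quadratic forms of `B` at the columns of `Φ - Y`. -/

namespace Matrix

variable {m n R : Type*} [Fintype n]

theorem PosDef.conjTranspose_mul_mul_same_eq_zero_iff [Ring R] [PartialOrder R] [StarRing R]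
    {B : Matrix n n R} (hB : B.PosDef) (M : Matrix n m R) : Mᴴ * B * M = 0 ↔ M = 0 := by
  refine ⟨fun h => ?_, fun h => by simp [h]⟩
  ext i j
  by_contra hij
  have hcol : Mᵀ j ≠ 0 := fun h0 => hij (congrFun h0 i)
  have hdiag : star (Mᵀ j) ⬝ᵥ (B *ᵥ Mᵀ j) = (Mᴴ * B * M) j j := by
    simp only [mul_apply, mulVec, dotProduct, conjTranspose_apply, transpose_apply,
      Finset.mul_sum, Finset.sum_mul, mul_assoc]
    exact Finset.sum_comm
  simpa [hdiag, h] using hB.dotProduct_mulVec_pos hcol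

theorem IsHermitian.conjTranspose_mul_inv_mul_sub_eq [CommRing R] [StarRing R] [DecidableEq n]
    {B : Matrix n n R} (hB : B.IsHermitian) (hdet : IsUnit B.det) (A Φ : Matrix n m R) :
    Aᴴ * B⁻¹ * A - (Aᴴ * Φ + Φᴴ * A - Φᴴ * B * Φ) =
      (Φ - B⁻¹ * A)ᴴ * B * (Φ - B⁻¹ * A) := by
  have hY : B * (B⁻¹ * A) = A := mul_nonsing_inv_cancel_left B A hdet
  have hYH : (B⁻¹ * A)ᴴ * B = Aᴴ := by
    rw [← hB.eq, ← conjTranspose_mul, hB.eq, hY]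
  have hΦY : Φᴴ * B * (B⁻¹ * A) = Φᴴ * A := by rw [Matrix.mul_assoc, hY]
  simp only [conjTranspose_sub, Matrix.sub_mul, Matrix.mul_sub, hΦY, hYH]
  rw [← Matrix.mul_assoc Aᴴ]
  abel

end Matrix

/-- Matrix quadratic-transform inequality: for Hermitian positive definite `B` and
any `Φ`, `Aᴴ B⁻¹ A − (Aᴴ Φ + Φᴴ A − Φᴴ B Φ) = (Φ − B⁻¹A)ᴴ B (Φ − B⁻¹A)` is positive
semidefinite, so `Aᴴ Φ + Φᴴ A − Φᴴ B Φ ⪯ Aᴴ B⁻¹ A` with equality iff `Φ = B⁻¹ A`. -/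
theorem stmt_6 {N d : ℕ} (B : Matrix (Fin N) (Fin N) ℂ) (hB : B.PosDef)
    (A : Matrix (Fin N) (Fin d) ℂ) (Φ : Matrix (Fin N) (Fin d) ℂ) :
    Aᴴ * B⁻¹ * A - (Aᴴ * Φ + Φᴴ * A - Φᴴ * B * Φ) =
      (Φ - B⁻¹ * A)ᴴ * B * (Φ - B⁻¹ * A) ∧
    (Aᴴ * B⁻¹ * A - (Aᴴ * Φ + Φᴴ * A - Φᴴ * B * Φ)).PosSemidef ∧
    (Aᴴ * Φ + Φᴴ * A - Φᴴ * B * Φ = Aᴴ * B⁻¹ * A ↔ Φ = B⁻¹ * A) := by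
  have hdet : IsUnit B.det := (isUnit_iff_isUnit_det B).1 hB.isUnit
  have hgap := hB.isHermitian.conjTranspose_mul_inv_mul_sub_eq hdet A Φ
  refine ⟨hgap, hgap ▸ hB.posSemidef.conjTranspose_mul_mul_same _, ?_⟩
  rw [eq_comm, ← sub_eq_zero, hgap, hB.conjTranspose_mul_mul_same_eq_zero_iff, sub_eq_zero]
end

section
/- Let B ∈ ℂ^{N×N} be Hermitian positive definite, F ∈ ℂ^{d×d} Hermitian positive semidefinite, and A ∈ ℂ^{N×d}. Then for every Φ ∈ ℂ^{N×d}, Re tr(F(Aᴴ Φ + Φᴴ A − Φᴴ B Φ)) ≤ Re tr(F Aᴴ B⁻¹ A). -/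
open Matrix
open scoped ComplexOrder

/-! Completing the square, `Aᴴ B⁻¹ A - (Aᴴ Φ + Φᴴ A - Φᴴ B Φ) = Dᴴ B D` with `D = Φ - B⁻¹ A`,
turns the gap between the two sides into `tr (F Dᴴ B D)`, the trace of a product of two positive
semidefinite matrices, which is nonnegative because `F = Xᴴ X` gives `tr (F M) = tr (X M Xᴴ)`. -/

open scoped MatrixOrder in
theorem Matrix.PosSemidef.trace_mul_nonneg {n 𝕜 : Type*} [Fintype n] [RCLike 𝕜]
    {A B : Matrix n n 𝕜} (hA : A.PosSemidef) (hB : B.PosSemidef) : 0 ≤ (A * B).trace := by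
  classical
  obtain ⟨X, rfl⟩ := CStarAlgebra.nonneg_iff_eq_star_mul_self.mp hA.nonneg
  rw [star_eq_conjTranspose, Matrix.mul_assoc, trace_mul_comm]
  exact (hB.mul_mul_conjTranspose_same X).trace_nonneg

theorem Matrix.conjTranspose_mul_inv_mul_sub_eq {m n R : Type*} [Fintype m] [DecidableEq m]
    [CommRing R] [StarRing R] {B : Matrix m m R} (hB : B.IsHermitian) (hdet : IsUnit B.det)
    (A Φ : Matrix m n R) :
    Aᴴ * B⁻¹ * A - (Aᴴ * Φ + Φᴴ * A - Φᴴ * B * Φ) = (Φ - B⁻¹ * A)ᴴ * B * (Φ - B⁻¹ * A) := by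
  simp only [conjTranspose_sub, conjTranspose_mul, hB.inv.eq, Matrix.sub_mul, Matrix.mul_sub,
    Matrix.mul_assoc, mul_nonsing_inv_cancel_left _ _ hdet, nonsing_inv_mul_cancel_left _ _ hdet]
  abel

/-- Weighted-trace form of the matrix quadratic transform: for Hermitian positive
definite `B`, Hermitian positive semidefinite `F`, and any `Φ`,
`Re tr(F(Aᴴ Φ + Φᴴ A − Φᴴ B Φ)) ≤ Re tr(F Aᴴ B⁻¹ A)`. -/
theorem stmt_7 {N d : ℕ} (B : Matrix (Fin N) (Fin N) ℂ) (hB : B.PosDef)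
    (F : Matrix (Fin d) (Fin d) ℂ) (hF : F.PosSemidef)
    (A : Matrix (Fin N) (Fin d) ℂ) (Φ : Matrix (Fin N) (Fin d) ℂ) :
    (Matrix.trace (F * (Aᴴ * Φ + Φᴴ * A - Φᴴ * B * Φ))).re ≤
      (Matrix.trace (F * (Aᴴ * B⁻¹ * A))).re := by
  have hgap := hF.trace_mul_nonneg (hB.posSemidef.conjTranspose_mul_mul_same (Φ - B⁻¹ * A))
  rw [← conjTranspose_mul_inv_mul_sub_eq hB.isHermitian
    ((isUnit_iff_isUnit_det B).mp hB.isUnit), mul_sub, trace_sub] at hgap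
  simpa only [Complex.sub_re, sub_nonneg] using (Complex.nonneg_iff.mp hgap).1
end

section
/- Let S ∈ ℂ^{d×d} be Hermitian positive semidefinite. Then for every Hermitian positive semidefinite Γ ∈ ℂ^{d×d}, log det(I + S) ≥ log det(I + Γ) − tr(Γ) + Re tr((I + Γ) S (I + S)⁻¹), with equality when Γ = S. In particular, log det(I + S) = max over Hermitian positive semidefinite Γ of [log det(I + Γ) − tr(Γ) + Re tr((I + Γ) S (I + S)⁻¹)]. -/
/-!
With `R = A^{-1/2}`, the positive definite matrix `R B R` has determinant `det B / det A` and
trace `tr (B A⁻¹)`, so `log x ≤ x - 1` applied to its eigenvalues gives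
`log det B - log det A ≤ tr (B A⁻¹) - n` for positive definite `A`, `B`. Taking `A = I + S`,
`B = I + Γ` and using `S (I + S)⁻¹ = I - (I + S)⁻¹` turns this into the inequality; equality at
`Γ = S` holds because `S` commutes with `I + S`.
-/

open Matrix
open scoped ComplexOrder

namespace Matrix

variable {n : Type*} [Fintype n] [DecidableEq n]

theorem mul_nonsing_inv_one_add {R : Type*} [CommRing R] {S : Matrix n n R}
    (h : IsUnit (1 + S).det) : S * (1 + S)⁻¹ = 1 - (1 + S)⁻¹ := by
  rw [eq_sub_iff_add_eq, ← add_one_mul, add_comm, mul_nonsing_inv _ h]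

theorem PosDef.log_det_re_le_trace_re_sub_card {M : Matrix n n ℂ} (hM : M.PosDef) :
    Real.log M.det.re ≤ M.trace.re - Fintype.card n := by
  set μ := hM.isHermitian.eigenvalues
  have hdet : M.det.re = ∏ i, μ i := by
    rw [hM.isHermitian.det_eq_prod_eigenvalues]
    norm_cast
  have htr : M.trace.re = ∑ i, μ i := by
    simp [hM.isHermitian.trace_eq_sum_eigenvalues, μ]
  rw [hdet, htr, Real.log_prod fun i _ => (hM.eigenvalues_pos i).ne']
  calc ∑ i, Real.log (μ i) ≤ ∑ i, (μ i - 1) :=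
        Finset.sum_le_sum fun i _ => Real.log_le_sub_one_of_pos (hM.eigenvalues_pos i)
    _ = ∑ i, μ i - Fintype.card n := by simp [Finset.sum_sub_distrib]

open scoped MatrixOrder in
theorem PosDef.log_det_re_le_add_trace_re_mul_inv {A B : Matrix n n ℂ} (hA : A.PosDef)
    (hB : B.PosDef) :
    Real.log B.det.re ≤ Real.log A.det.re + (B * A⁻¹).trace.re - Fintype.card n := by
  set R := CFC.sqrt A⁻¹
  have hRR : R * R = A⁻¹ := CFC.sqrt_mul_sqrt_self _ hA.inv.posSemidef.nonneg
  have hR : Rᴴ = R := (CFC.sqrt_nonneg A⁻¹).posSemidef.isHermitian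
  have hRu : IsUnit R := (CFC.isUnit_sqrt_iff _ hA.inv.posSemidef.nonneg).2 hA.inv.isUnit
  have hM : (R * B * R).PosDef := by
    simpa only [hR] using hB.conjTranspose_mul_mul_same (mulVec_injective_of_isUnit hRu)
  have htrace : (R * B * R).trace = (B * A⁻¹).trace := by
    rw [trace_mul_cycle, hRR, trace_mul_comm]
  have hdet : (R * B * R).det = B.det / A.det := by
    rw [det_mul, det_mul, mul_right_comm, ← det_mul, hRR, det_nonsing_inv, Ring.inverse_eq_inv,
      div_eq_inv_mul]
  obtain ⟨a, ha, ha'⟩ := RCLike.pos_iff_exists_ofReal.1 hA.det_pos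
  obtain ⟨b, hb, hb'⟩ := RCLike.pos_iff_exists_ofReal.1 hB.det_pos
  have key := hM.log_det_re_le_trace_re_sub_card
  rw [htrace, hdet, ← ha', ← hb'] at key
  rw [← ha', ← hb']
  simp only [← RCLike.ofReal_div, RCLike.re_to_complex.symm, RCLike.ofReal_re] at key ⊢
  rw [Real.log_div hb.ne' ha.ne'] at key
  linarith

end Matrix

/-- Matrix Lagrangian dual transform: for Hermitian positive semidefinite `S`,
`log det(I + S) ≥ log det(I + Γ) − tr Γ + Re tr((I + Γ) S (I + S)⁻¹)` for every
Hermitian positive semidefinite `Γ`, with equality when `Γ = S`; hence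
`log det(I + S)` is the maximum of the right-hand side over such `Γ`. -/
theorem stmt_9 {d : ℕ} (S : Matrix (Fin d) (Fin d) ℂ) (hS : S.PosSemidef) :
    (∀ Γ : Matrix (Fin d) (Fin d) ℂ, Γ.PosSemidef →
      Real.log ((1 + Γ : Matrix (Fin d) (Fin d) ℂ).det.re) - (Matrix.trace Γ).re +
          (Matrix.trace ((1 + Γ) * S * (1 + S)⁻¹)).re ≤
        Real.log ((1 + S : Matrix (Fin d) (Fin d) ℂ).det.re)) ∧
    Real.log ((1 + S : Matrix (Fin d) (Fin d) ℂ).det.re) - (Matrix.trace S).re +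
        (Matrix.trace ((1 + S) * S * (1 + S)⁻¹)).re =
      Real.log ((1 + S : Matrix (Fin d) (Fin d) ℂ).det.re) := by
  have hA : (1 + S).PosDef := PosDef.one.add_posSemidef hS
  have hAu : IsUnit (1 + S).det := (isUnit_iff_isUnit_det _).1 hA.isUnit
  refine ⟨fun Γ hΓ => ?_, ?_⟩
  · have key := hA.log_det_re_le_add_trace_re_mul_inv (PosDef.one.add_posSemidef hΓ)
    have htr : ((1 + Γ) * S * (1 + S)⁻¹).trace = d + Γ.trace - ((1 + Γ) * (1 + S)⁻¹).trace := by
      rw [mul_assoc, mul_nonsing_inv_one_add hAu, mul_sub, mul_one, trace_sub, trace_add,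
        trace_one, Fintype.card_fin]
    rw [htr]
    rw [Fintype.card_fin] at key
    simp only [Complex.sub_re, Complex.add_re, Complex.natCast_re]
    linarith
  · rw [((Commute.one_left S).add_left (Commute.refl S)).eq, mul_nonsing_inv_cancel_right _ _ hAu]
    ring
end

section
/- Let F ∈ ℂ^{L_R×N} and G ∈ ℂ^{L_T×M} have all entries of modulus 1, let Σ ∈ ℂ^{L_R×L_T} have all entries of modulus at most 1, let H = Fᴴ Σ G ∈ ℂ^{N×M}, let W ∈ ℂ^{M×d} with ‖W‖_F² ≤ P for some P > 0, let A ∈ ℂ^{N×N} be Hermitian positive semidefinite, σ > 0, and Q = A + σ² I_N. Then log det(I_d + Wᴴ Hᴴ Q⁻¹ H W) ≤ d · log(1 + M · N^{3/2} · (L_T · L_R)² · P / σ²). -/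
open Matrix
open scoped ComplexOrder

/-- The Frobenius norm of a complex matrix. -/
noncomputable def frobNorm {m n : Type*} [Fintype m] [Fintype n]
    (A : Matrix m n ℂ) : ℝ :=
  Real.sqrt (∑ i, ∑ j, ‖A i j‖ ^ 2)

/-!
Write `B = Xᴴ Q⁻¹ X` with `X = H W`. Since `Q ⪰ σ² I`, we have `Q⁻¹ ⪯ σ⁻² I`, so
`tr B ≤ σ⁻² ‖X‖_F² ≤ σ⁻² ‖H‖_F² ‖W‖_F²`, and submultiplicativity of the Frobenius norm with the
entry bounds gives `‖H‖_F² ≤ N M (L_T L_R)²`. Finally, if `B ⪰ 0` has eigenvalues `λᵢ`, then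
`det (I + B) = ∏ (1 + λᵢ) ≤ (1 + tr B)ᵈ`. The factor `N^{3/2}` of the bound only enters through
`N ≤ N^{3/2}`.
-/

section Frobenius

variable {l m n r : Type*} [Fintype l] [Fintype m] [Fintype n] [Fintype r]

theorem frobNorm_sq (A : Matrix m n ℂ) : frobNorm A ^ 2 = ∑ i, ∑ j, ‖A i j‖ ^ 2 :=
  Real.sq_sqrt (by positivity)

attribute [local instance] Matrix.frobeniusNormedAddCommGroup in
theorem frobNorm_eq_norm (A : Matrix m n ℂ) : frobNorm A = ‖A‖ := by
  simp only [frobNorm, frobenius_norm_def, Real.rpow_two, Real.sqrt_eq_rpow]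

attribute [local instance] Matrix.frobeniusNormedAddCommGroup in
theorem frobNorm_sq_mul_le (A : Matrix l m ℂ) (B : Matrix m n ℂ) :
    frobNorm (A * B) ^ 2 ≤ frobNorm A ^ 2 * frobNorm B ^ 2 := by
  simp only [frobNorm_eq_norm, ← mul_pow]
  exact pow_le_pow_left₀ (norm_nonneg _) (frobenius_norm_mul A B) 2

theorem frobNorm_sq_le_of_norm_le {A : Matrix m n ℂ} {a : ℝ} (hA : ∀ i j, ‖A i j‖ ≤ a) :
    frobNorm A ^ 2 ≤ Fintype.card m * Fintype.card n * a ^ 2 := by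
  rw [frobNorm_sq]
  calc ∑ i, ∑ j, ‖A i j‖ ^ 2 ≤ ∑ _i : m, ∑ _j : n, a ^ 2 := by
        gcongr with i _ j _
        exact hA i j
    _ = _ := by simp [mul_assoc]

theorem re_trace_conjTranspose_mul_self_eq_frobNorm_sq (A : Matrix m n ℂ) :
    (Aᴴ * A).trace.re = frobNorm A ^ 2 := by
  simp only [frobNorm_sq, trace, diag, mul_apply, conjTranspose_apply, Complex.re_sum,
    RCLike.star_def, Complex.conj_mul', ← Complex.ofReal_pow, Complex.ofReal_re]
  exact Finset.sum_comm

theorem frobNorm_sq_conjTranspose_mul_mul_le {F : Matrix r n ℂ} (hF : ∀ i j, ‖F i j‖ = 1)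
    {S : Matrix r l ℂ} (hS : ∀ i j, ‖S i j‖ ≤ 1) {G : Matrix l m ℂ} (hG : ∀ i j, ‖G i j‖ = 1) :
    frobNorm (Fᴴ * S * G) ^ 2 ≤
      Fintype.card n * Fintype.card m * ((Fintype.card l : ℝ) * Fintype.card r) ^ 2 := by
  have hF' := frobNorm_sq_le_of_norm_le (A := Fᴴ) (a := 1) fun i j => by simp [hF]
  have hS' := frobNorm_sq_le_of_norm_le hS
  have hG' := frobNorm_sq_le_of_norm_le (A := G) (a := 1) fun i j => (hG i j).le
  calc frobNorm (Fᴴ * S * G) ^ 2 ≤ frobNorm Fᴴ ^ 2 * frobNorm S ^ 2 * frobNorm G ^ 2 :=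
        (frobNorm_sq_mul_le _ _).trans
          (mul_le_mul_of_nonneg_right (frobNorm_sq_mul_le _ _) (sq_nonneg _))
    _ ≤ (Fintype.card n * Fintype.card r * 1 ^ 2) * (Fintype.card r * Fintype.card l * 1 ^ 2) *
          (Fintype.card l * Fintype.card m * 1 ^ 2) := by gcongr
    _ = _ := by ring

end Frobenius

namespace Matrix

variable {𝕜 : Type*} [RCLike 𝕜] {m n : Type*} [DecidableEq n]

theorem PosSemidef.posDef_add_smul_one {A : Matrix n n 𝕜} (hA : A.PosSemidef) {c : ℝ}
    (hc : 0 < c) : (A + (c : 𝕜) • 1).PosDef :=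
  PosDef.posSemidef_add hA (PosDef.one.smul (RCLike.ofReal_pos.mpr hc))

variable [Fintype m] [Fintype n]

theorem IsHermitian.det_one_add {B : Matrix n n 𝕜} (hB : B.IsHermitian) :
    (1 + B).det = ∏ i, (1 + (hB.eigenvalues i : 𝕜)) := by
  have h : 1 + B = cfc (fun x : ℝ => 1 + x) B := by
    rw [cfc_add .., cfc_const_one .., cfc_id' ..]
  rw [h, hB.cfc_eq]
  simp [IsHermitian.cfc, -Unitary.conjStarAlgAut_apply]

theorem PosSemidef.log_re_det_one_add_le {B : Matrix n n 𝕜} (hB : B.PosSemidef) :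
    Real.log (RCLike.re (1 + B).det) ≤ Fintype.card n * Real.log (1 + RCLike.re B.trace) := by
  set μ := hB.1.eigenvalues
  have hμ : ∀ i, 0 ≤ μ i := hB.eigenvalues_nonneg
  have hdet : RCLike.re (1 + B).det = ∏ i, (1 + μ i) := by
    rw [hB.1.det_one_add]
    exact_mod_cast RCLike.ofReal_re (K := 𝕜) _
  have htr : RCLike.re B.trace = ∑ i, μ i := by
    rw [hB.1.trace_eq_sum_eigenvalues]
    exact_mod_cast RCLike.ofReal_re (K := 𝕜) _
  rw [hdet, htr, ← Real.log_pow]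
  refine Real.log_le_log (Finset.prod_pos fun i _ => by linarith [hμ i]) ?_
  calc ∏ i, (1 + μ i) ≤ ∏ _i : n, (1 + ∑ j, μ j) :=
        Finset.prod_le_prod (fun i _ => by linarith [hμ i]) fun i _ => by
          linarith [Finset.single_le_sum (fun j _ => hμ j) (Finset.mem_univ i)]
    _ = (1 + ∑ j, μ j) ^ Fintype.card n := by simp

theorem PosSemidef.inv_smul_one_sub_inv_add_smul_one {A : Matrix n n 𝕜} (hA : A.PosSemidef)
    {c : ℝ} (hc : 0 < c) : ((c : 𝕜)⁻¹ • 1 - (A + (c : 𝕜) • 1)⁻¹).PosSemidef := by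
  set Q := A + (c : 𝕜) • 1
  have hc' : (c : 𝕜) ≠ 0 := RCLike.ofReal_ne_zero.mpr hc.ne'
  have hQ : Q.PosDef := hA.posDef_add_smul_one hc
  -- `c⁻¹ • 1 - Q⁻¹ = Q⁻¹ (c⁻¹ Q² - Q) Q⁻¹` and `c⁻¹ Q² - Q = c⁻¹ A² + A`.
  have hS : (Aᴴ * ((c : 𝕜)⁻¹ • 1) * A + A).PosSemidef := by
    refine (PosSemidef.conjTranspose_mul_mul_same (.smul .one ?_) A).add hA
    exact inv_nonneg.mpr (RCLike.ofReal_nonneg.mpr hc.le)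
  have hSQ : Aᴴ * ((c : 𝕜)⁻¹ • 1) * A + A = (c : 𝕜)⁻¹ • (Q * Q) - Q := by
    simp only [Q, hA.1.eq, Matrix.mul_add, Matrix.add_mul, Matrix.mul_smul, Matrix.smul_mul,
      smul_add, smul_smul, inv_mul_cancel_left₀ hc', inv_mul_cancel₀ hc', Matrix.mul_one,
      Matrix.one_mul, one_smul]
    abel
  have hconj : Q⁻¹ᴴ * ((c : 𝕜)⁻¹ • (Q * Q) - Q) * Q⁻¹ = (c : 𝕜)⁻¹ • 1 - Q⁻¹ := by
    have hdet : IsUnit Q.det := hQ.det_pos.ne'.isUnit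
    rw [hQ.inv.1.eq, Matrix.mul_sub, Matrix.sub_mul, Matrix.mul_smul, Matrix.smul_mul,
      ← Matrix.mul_assoc, nonsing_inv_mul Q hdet, Matrix.one_mul, mul_nonsing_inv Q hdet,
      Matrix.one_mul]
  rw [← hconj, ← hSQ]
  exact hS.conjTranspose_mul_mul_same _

theorem re_trace_conjTranspose_mul_mul_le {B : Matrix n n 𝕜} {c : ℝ}
    (hB : ((c : 𝕜) • 1 - B).PosSemidef) (X : Matrix n m 𝕜) :
    RCLike.re (Xᴴ * B * X).trace ≤ c * RCLike.re (Xᴴ * X).trace := by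
  have h := (hB.conjTranspose_mul_mul_same X).trace_nonneg
  rw [Matrix.mul_sub, Matrix.sub_mul, trace_sub, Matrix.mul_smul, Matrix.smul_mul, Matrix.mul_one,
    trace_smul, sub_nonneg, RCLike.le_iff_re_im] at h
  simpa using h.1

end Matrix

theorem re_trace_conjTranspose_mul_inv_add_smul_one_mul_le {m n : Type*} [Fintype m] [Fintype n]
    [DecidableEq n] {A : Matrix n n ℂ} (hA : A.PosSemidef) {c : ℝ} (hc : 0 < c)
    (X : Matrix n m ℂ) :
    (Xᴴ * (A + (c : ℂ) • 1)⁻¹ * X).trace.re ≤ frobNorm X ^ 2 / c := by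
  have h := re_trace_conjTranspose_mul_mul_le (c := c⁻¹)
    (by simpa using hA.inv_smul_one_sub_inv_add_smul_one (𝕜 := ℂ) hc) X
  simp only [RCLike.re_to_complex, re_trace_conjTranspose_mul_self_eq_frobNorm_sq] at h
  rwa [div_eq_inv_mul]

theorem Real.natCast_le_rpow_of_one_le (n : ℕ) {y : ℝ} (hy : 1 ≤ y) : (n : ℝ) ≤ (n : ℝ) ^ y := by
  rcases Nat.eq_zero_or_pos n with rfl | hn
  · simp [Real.zero_rpow (by linarith : y ≠ 0)]
  · exact Real.self_le_rpow_of_one_le (by exact_mod_cast hn) hy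

theorem stmt_18_general {LR LT N M d : ℕ}
    (F : Matrix (Fin LR) (Fin N) ℂ) (hF : ∀ i j, ‖F i j‖ = 1)
    (G : Matrix (Fin LT) (Fin M) ℂ) (hG : ∀ i j, ‖G i j‖ = 1)
    (Sig : Matrix (Fin LR) (Fin LT) ℂ) (hSig : ∀ i j, ‖Sig i j‖ ≤ 1)
    (W : Matrix (Fin M) (Fin d) ℂ) (P : ℝ) (hW : frobNorm W ^ 2 ≤ P)
    (A : Matrix (Fin N) (Fin N) ℂ) (hA : A.PosSemidef) (σ : ℝ) (hσ : 0 < σ) :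
    Real.log (((1 : Matrix (Fin d) (Fin d) ℂ) +
        Wᴴ * (Fᴴ * Sig * G)ᴴ * (A + (σ ^ 2 : ℂ) • (1 : Matrix (Fin N) (Fin N) ℂ))⁻¹ *
          (Fᴴ * Sig * G) * W).det.re) ≤
      d * Real.log (1 + M * (N : ℝ) ^ ((3 : ℝ) / 2) * ((LT : ℝ) * LR) ^ 2 * P / σ ^ 2) := by
  set H := Fᴴ * Sig * G
  have hc : 0 < σ ^ 2 := pow_pos hσ 2
  have hQ := hA.posDef_add_smul_one (𝕜 := ℂ) hc
  have htr := re_trace_conjTranspose_mul_inv_add_smul_one_mul_le hA hc (H * W)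
  push_cast at hQ htr
  set B := (H * W)ᴴ * (A + (σ : ℂ) ^ 2 • 1)⁻¹ * (H * W)
  have hB : B.PosSemidef := hQ.inv.posSemidef.conjTranspose_mul_mul_same _
  have hB0 : 0 ≤ B.trace.re := (Complex.nonneg_iff.mp hB.trace_nonneg).1
  have hP : 0 ≤ P := (sq_nonneg _).trans hW
  have hX : frobNorm (H * W) ^ 2 ≤ N * M * ((LT : ℝ) * LR) ^ 2 * P :=
    (frobNorm_sq_mul_le H W).trans <| mul_le_mul
      (by simpa using frobNorm_sq_conjTranspose_mul_mul_le hF hSig hG) hW (sq_nonneg _)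
      (by positivity)
  have hN := Real.natCast_le_rpow_of_one_le N (by norm_num : (1 : ℝ) ≤ 3 / 2)
  calc _ = Real.log ((1 + B).det.re) := by simp only [B, conjTranspose_mul, Matrix.mul_assoc]
    _ ≤ d * Real.log (1 + B.trace.re) := by simpa using hB.log_re_det_one_add_le
    _ ≤ d * Real.log (1 + N * M * ((LT : ℝ) * LR) ^ 2 * P / σ ^ 2) := by
        gcongr
        exact htr.trans (by gcongr)
    _ ≤ _ := by
        rw [mul_comm (N : ℝ)]
        gcongr

/-- Per-user rate bound (Lemma 3): with channel `H = Fᴴ Σ G` built from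
unit-modulus field responses and path responses of modulus at most `1`,
beamformer power `‖W‖_F² ≤ P`, and interference-plus-noise matrix
`Q = A + σ² I` with `A ⪰ 0`, the rate satisfies
`log det(I + Wᴴ Hᴴ Q⁻¹ H W) ≤ d log(1 + M N^{3/2} (L_T L_R)² P / σ²)`. -/
theorem stmt_18 {LR LT N M d : ℕ}
    (F : Matrix (Fin LR) (Fin N) ℂ) (hF : ∀ i j, ‖F i j‖ = 1)
    (G : Matrix (Fin LT) (Fin M) ℂ) (hG : ∀ i j, ‖G i j‖ = 1)
    (Sig : Matrix (Fin LR) (Fin LT) ℂ) (hSig : ∀ i j, ‖Sig i j‖ ≤ 1)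
    (W : Matrix (Fin M) (Fin d) ℂ) (P : ℝ) (hP : 0 < P) (hW : frobNorm W ^ 2 ≤ P)
    (A : Matrix (Fin N) (Fin N) ℂ) (hA : A.PosSemidef) (σ : ℝ) (hσ : 0 < σ) :
    Real.log (((1 : Matrix (Fin d) (Fin d) ℂ) +
        Wᴴ * (Fᴴ * Sig * G)ᴴ * (A + (σ ^ 2 : ℂ) • (1 : Matrix (Fin N) (Fin N) ℂ))⁻¹ *
          (Fᴴ * Sig * G) * W).det.re) ≤
      d * Real.log (1 + M * (N : ℝ) ^ ((3 : ℝ) / 2) * ((LT : ℝ) * LR) ^ 2 * P / σ ^ 2) :=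
  stmt_18_general F hF G hG Sig hSig W P hW A hA σ hσ
end
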